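/- Let ρ be a density matrix on ℂ^d, let x and x' be orthonormal vectors in ℂ^d, and let a, b, c ≥ 0 be integers with N := 2a+b+c ≥ 1. Write p := ⟨x|ρ|x⟩, p' := ⟨x'|ρ|x'⟩, and w := ⟨x|ρ|x'⟩. Then Σ_{π∈S_N} tr[ ( (|x⟩⟨x'|)^{⊗a} ⊗ (|x'⟩⟨x|)^{⊗a} ⊗ (|x⟩⟨x|)^{⊗b} ⊗ (|x'⟩⟨x'|)^{⊗c} ) · ρ^{⊗N} · P_π ] = (b+a)!·(c+a)! · Σ_{ℓ=0}^{min(b+a, c+a)} C(b+a, ℓ)·C(c+a, ℓ) · |w|^{2ℓ} · p^{b+a−ℓ} · p'^{c+a−ℓ}, where C(n,ℓ) denotes the binomial coefficient. (These are the diagonal moments of the complex central 2×2 Wishart distribution.) -/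

import Mathlib

open MeasureTheory Matrix BigOperators Finset
open scoped ComplexOrder

noncomputable section

/-- The old Mathlib `Matrix.PosSemidef.sqrt` (removed from Mathlib), with its old definition. -/
def Matrix.PosSemidef.sqrt {n 𝕜 : Type*} [Fintype n] [DecidableEq n] [RCLike 𝕜]
    {A : Matrix n n 𝕜} (hA : A.PosSemidef) : Matrix n n 𝕜 :=
  (hA.1.eigenvectorUnitary : Matrix n n 𝕜) *
    diagonal (fun i => ((Real.sqrt (hA.1.eigenvalues i) : ℝ) : 𝕜)) *
    (star hA.1.eigenvectorUnitary : Matrix n n 𝕜)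

section Prelude

variable {n : Type*} [Fintype n] [DecidableEq n]

/-- The inner product `⟨u|A|v⟩ = Σᵢⱼ conj(uᵢ) Aᵢⱼ vⱼ`. -/
def braket (A : Matrix n n ℂ) (u v : n → ℂ) : ℂ :=
  ∑ i, ∑ j, (starRingEnd ℂ) (u i) * A i j * v j

/-- `μ` is the Haar measure on unit vectors: a probability measure supported on the
unit sphere that is invariant under every unitary. -/
def IsHaarUnit (μ : Measure (n → ℂ)) : Prop :=
  IsProbabilityMeasure μ ∧
  (∀ᵐ φ ∂μ, ∑ i, Complex.normSq (φ i) = 1) ∧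
  ∀ U ∈ Matrix.unitaryGroup n ℂ, Measure.map (fun φ => U.mulVec φ) μ = μ

/-- `r_φ = d ⟨φ|ρ|φ⟩`. -/
def rphi (ρ : Matrix n n ℂ) (φ : n → ℂ) : ℝ :=
  (Fintype.card n : ℝ) * (braket ρ φ φ).re

/-- The Scrooge (ρ-distorted) state `√(dρ) φ / √(r_φ)`. -/
def scroogeVec {ρ : Matrix n n ℂ} (hρ : ρ.PosSemidef) (φ : n → ℂ) : n → ℂ :=
  ((Real.sqrt (Fintype.card n) / Real.sqrt (rphi ρ φ) : ℝ) : ℂ) • hρ.sqrt.mulVec φ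

/-- Scrooge-ensemble expectation of a real function of the pure state:
`E_{ψ∼S_ρ}[f(ψ)] = ∫ dμ_Haar(φ) r_φ f(√(dρ)φ/√(r_φ))`. -/
def scroogeExp (μ : Measure (n → ℂ)) {ρ : Matrix n n ℂ} (hρ : ρ.PosSemidef)
    (f : (n → ℂ) → ℝ) : ℝ :=
  ∫ φ, rphi ρ φ * f (scroogeVec hρ φ) ∂μ

/-- The largest eigenvalue of a Hermitian matrix. -/
def maxEig {A : Matrix n n ℂ} (hA : A.IsHermitian) : ℝ := ⨆ i, hA.eigenvalues i

/-- Min-entropy `S_∞ = -log₂ ‖A‖_∞`. -/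
def Sinf {A : Matrix n n ℂ} (hA : A.IsHermitian) : ℝ := -Real.logb 2 (maxEig hA)

/-- The `k`-fold tensor (Kronecker) power of a matrix, on index type `Fin k → n`. -/
def tpow (A : Matrix n n ℂ) (k : ℕ) : Matrix (Fin k → n) (Fin k → n) ℂ :=
  fun x y => ∏ i, A (x i) (y i)

/-- Tensor product of a family of matrices, on index type `Fin k → n`. -/
def tpowFam {k : ℕ} (A : Fin k → Matrix n n ℂ) :
    Matrix (Fin k → n) (Fin k → n) ℂ :=
  fun x y => ∏ i, A i (x i) (y i)

/-- The operator `P_π` permuting tensor factors: `P_π (v₁⊗⋯⊗v_k) = v_{π⁻¹(1)}⊗⋯⊗v_{π⁻¹(k)}`. -/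
def permMat (n : Type*) [DecidableEq n] (k : ℕ) (π : Equiv.Perm (Fin k)) :
    Matrix (Fin k → n) (Fin k → n) ℂ :=
  fun x y => if (fun i => x (π i)) = y then 1 else 0

/-- Loewner order: `A ⪯ B` iff `B - A` is positive semidefinite. -/
def matLE {m : Type*} [Fintype m] (A B : Matrix m m ℂ) : Prop := (B - A).PosSemidef

/-- The trace norm `‖X‖₁ = tr √(XᴴX)`. -/
def traceNorm (X : Matrix n n ℂ) : ℝ :=
  ((Matrix.posSemidef_conjTranspose_mul_self X).sqrt.trace).re

/-- The operator (spectral) norm `‖X‖_∞ = √(max eig (XᴴX))`. -/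
def opNorm (X : Matrix n n ℂ) : ℝ :=
  Real.sqrt (maxEig (Matrix.posSemidef_conjTranspose_mul_self X).1)

/-- k-th moment of the Scrooge ensemble, `χ^{(k)}_{S_ρ} = E_{ψ∼S_ρ}[(|ψ⟩⟨ψ|)^{⊗k}]`,
computed entrywise. -/
def scroogeMoment (μ : Measure (n → ℂ)) {ρ : Matrix n n ℂ} (hρ : ρ.PosSemidef) (k : ℕ) :
    Matrix (Fin k → n) (Fin k → n) ℂ :=
  fun x y => ∫ φ, ((rphi ρ φ : ℝ) : ℂ) *
    ∏ i, (scroogeVec hρ φ (x i) * (starRingEnd ℂ) (scroogeVec hρ φ (y i))) ∂μ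

end Prelude

/-- The rank-one operator `|u⟩⟨v|`. -/
def rank1 {n : Type*} (u v : n → ℂ) : Matrix n n ℂ :=
  fun i j => u i * (starRingEnd ℂ) (v j)

/-!
The trace of `⊗ᵢ |uᵢ⟩⟨vᵢ|` against `ρ^{⊗N} P_π` factorises as `∏ᵢ ⟨v_{π i}|ρ|uᵢ⟩`. Here
`uᵢ = x` exactly for `i` in a set `S` and `vᵢ = x` exactly for `i` in a set `T`, both of size
`m = a + b` (and `x'` otherwise), so the product only depends on `l = |π(S) \ T|`: it is
`(⟨x|ρ|x'⟩⟨x'|ρ|x⟩)^l p^(m-l) p'^(N-m-l)`, and `⟨x'|ρ|x⟩ = conj w` as `ρ` is Hermitian.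
Every `m`-set `A` is `π(S)` for exactly `m! (N-m)!` permutations, and `C(m, l) C(N-m, l)` of
them satisfy `|A \ T| = l` (choose `A ∩ T` and `A \ T`).
-/

open scoped Nat

section PermutationCounting

variable {α : Type*} [Fintype α] [DecidableEq α]

def permMapEqEquiv (s t : Finset α) :
    {π : Equiv.Perm α // s.map π.toEmbedding = t} ≃
      ({x // x ∈ s} ≃ {x // x ∈ t}) × ({x // x ∉ s} ≃ {x // x ∉ t}) where
  toFun π :=
    have h : ∀ x, x ∈ s ↔ π.1 x ∈ t := fun x => by simp [← π.2]
    (π.1.subtypeEquiv h, π.1.subtypeEquiv fun x => (h x).not)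
  invFun e := ⟨Equiv.subtypeCongr e.1 e.2, by
    ext y
    simp only [mem_map_equiv]
    by_cases hy : y ∈ t
    · simp [Equiv.subtypeCongr, hy]
    · simpa [Equiv.subtypeCongr, hy] using (e.2.symm ⟨y, hy⟩).2⟩
  left_inv π := by
    ext x
    by_cases hx : x ∈ s <;> simp [Equiv.subtypeCongr, hx]
  right_inv e := by
    ext ⟨x, hx⟩ <;> simp [Equiv.subtypeCongr, hx]

theorem card_perm_map_eq {s t : Finset α} (h : #s = #t) :
    #{π : Equiv.Perm α | s.map π.toEmbedding = t} = (#s)! * (Fintype.card α - #s)! := by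
  have hcompl : Fintype.card {x // x ∉ s} = Fintype.card {x // x ∉ t} := by
    simp [Fintype.card_subtype_compl, h]
  rw [← Fintype.card_subtype, Fintype.card_congr (permMapEqEquiv s t), Fintype.card_prod,
    Fintype.card_equiv (Fintype.equivOfCardEq (by simpa using h)),
    Fintype.card_equiv (Fintype.equivOfCardEq hcompl)]
  simp [Fintype.card_subtype_compl]

theorem sum_perm_map_eq_sum_powersetCard {M : Type*} [AddCommMonoid M] (s : Finset α)
    (f : Finset α → M) :
    ∑ π : Equiv.Perm α, f (s.map π.toEmbedding) =
      ((#s)! * (Fintype.card α - #s)!) • ∑ A ∈ powersetCard #s univ, f A := by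
  rw [← sum_fiberwise_of_maps_to (g := fun π : Equiv.Perm α => s.map π.toEmbedding)
    (t := powersetCard #s univ) (fun π _ => by simp), smul_sum]
  refine sum_congr rfl fun A hA => ?_
  rw [sum_congr rfl fun π hπ => congrArg f (mem_filter.mp hπ).2, sum_const,
    card_perm_map_eq (mem_powersetCard_univ.mp hA).symm]

theorem card_powersetCard_filter_card_sdiff {t : Finset α} {l : ℕ} (hl : l ≤ #t) :
    #{A ∈ powersetCard #t univ | #(A \ t) = l} =
      (#t).choose l * (Fintype.card α - #t).choose l := by
  have hsplit : #{A ∈ powersetCard #t univ | #(A \ t) = l} =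
      #(powersetCard (#t - l) t ×ˢ powersetCard l tᶜ) := by
    refine card_nbij' (fun A => (A ∩ t, A \ t)) (fun P => P.1 ∪ P.2) ?_ ?_ ?_ ?_
    · intro A hA
      rw [mem_coe, mem_filter, mem_powersetCard_univ] at hA
      rw [mem_coe, mem_product, mem_powersetCard, mem_powersetCard,
        subset_compl_iff_disjoint_right]
      have := card_inter_add_card_sdiff A t
      exact ⟨⟨inter_subset_right, by dsimp only; omega⟩, disjoint_sdiff_self_left, hA.2⟩
    · intro P hP
      rw [mem_coe, mem_product, mem_powersetCard, mem_powersetCard,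
        subset_compl_iff_disjoint_right] at hP
      rw [mem_coe, mem_filter, mem_powersetCard_univ]
      have hsdiff : (P.1 ∪ P.2) \ t = P.2 := by ext; grind [disjoint_left]
      rw [card_union_of_disjoint (disjoint_of_subset_left hP.1.1 hP.2.1.symm), hsdiff]
      omega
    · intro A _
      exact sup_inf_sdiff A t
    · intro P hP
      rw [mem_coe, mem_product, mem_powersetCard, mem_powersetCard,
        subset_compl_iff_disjoint_right] at hP
      ext <;> grind [disjoint_left]
  rw [hsplit, card_product, card_powersetCard, card_powersetCard, card_compl, Nat.choose_symm hl]

theorem sum_powersetCard_card_sdiff {M : Type*} [AddCommMonoid M] (t : Finset α) (f : ℕ → M) :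
    ∑ A ∈ powersetCard #t univ, f #(A \ t) =
      ∑ l ∈ range (min #t (Fintype.card α - #t) + 1),
        ((#t).choose l * (Fintype.card α - #t).choose l) • f l := by
  have hmaps : ∀ A ∈ powersetCard #t univ,
      #(A \ t) ∈ range (min #t (Fintype.card α - #t) + 1) := by
    intro A hA
    rw [mem_powersetCard_univ] at hA
    have h₁ : #(A \ t) ≤ #A := card_le_card sdiff_subset
    have h₂ : #(A \ t) ≤ #tᶜ := card_le_card fun x hx => mem_compl.mpr (mem_sdiff.mp hx).2
    rw [card_compl] at h₂
    rw [mem_range]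
    omega
  rw [← sum_fiberwise_of_maps_to hmaps]
  refine sum_congr rfl fun l hl => ?_
  rw [sum_congr rfl fun A hA => congrArg f (mem_filter.mp hA).2, sum_const,
    card_powersetCard_filter_card_sdiff (by rw [mem_range] at hl; omega)]

theorem prod_ite_mem_ite_mem {β R : Type*} [CommMonoid R] {A T : Finset α} (h : #A = #T)
    (B : β → β → R) (y z : β) :
    ∏ i, B (if i ∈ T then y else z) (if i ∈ A then y else z) =
      (B y z * B z y) ^ #(A \ T) * B y y ^ (#T - #(A \ T)) *
        B z z ^ (Fintype.card α - #T - #(A \ T)) := by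
  have hcases : ∀ i, B (if i ∈ T then y else z) (if i ∈ A then y else z) =
      if i ∈ T then (if i ∈ A then B y y else B y z) else (if i ∈ A then B z y else B z z) := by
    intro i; split_ifs <;> rfl
  simp only [hcases, prod_ite, prod_const, filter_filter]
  have hTA : ({a | a ∈ T ∧ a ∈ A} : Finset α) = A ∩ T := by ext; simp [and_comm]
  have hTnA : ({a | a ∈ T ∧ a ∉ A} : Finset α) = T \ A := by ext; simp
  have hnTA : ({a | a ∉ T ∧ a ∈ A} : Finset α) = A \ T := by ext; simp [and_comm]
  have hnTnA : ({a | a ∉ T ∧ a ∉ A} : Finset α) = (A ∪ T)ᶜ := by ext; simp [and_comm]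
  have h₁ := card_inter_add_card_sdiff A T
  have h₂ := card_sdiff_add_card_inter T A
  have h₃ := card_union_add_card_inter A T
  have h₄ := card_compl (A ∪ T)
  have h₅ := card_le_univ (A ∪ T)
  rw [inter_comm] at h₂
  rw [hTA, hTnA, hnTA, hnTnA, show #(A ∩ T) = #T - #(A \ T) by omega,
    show #(T \ A) = #(A \ T) by omega,
    show #(A ∪ T)ᶜ = Fintype.card α - #T - #(A \ T) by omega, mul_pow]
  ac_rfl

theorem sum_perm_prod_ite_mem {β R : Type*} [CommSemiring R] {S T : Finset α} (h : #S = #T)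
    (B : β → β → R) (y z : β) :
    ∑ π : Equiv.Perm α, ∏ i, B (if π i ∈ T then y else z) (if i ∈ S then y else z) =
      ((#T)! * (Fintype.card α - #T)! : ℕ) *
        ∑ l ∈ range (min #T (Fintype.card α - #T) + 1),
          ((#T).choose l * (Fintype.card α - #T).choose l : ℕ) *
            ((B y z * B z y) ^ l * B y y ^ (#T - l) * B z z ^ (Fintype.card α - #T - l)) := by
  let F : ℕ → R := fun l => (B y z * B z y) ^ l * B y y ^ (#T - l) *
    B z z ^ (Fintype.card α - #T - l)
  have hprod : ∀ π : Equiv.Perm α,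
      ∏ i, B (if π i ∈ T then y else z) (if i ∈ S then y else z) =
        F #(S.map π.toEmbedding \ T) := by
    intro π
    calc ∏ i, B (if π i ∈ T then y else z) (if i ∈ S then y else z)
        = ∏ i, B (if π i ∈ T then y else z) (if π i ∈ S.map π.toEmbedding then y else z) := by
          simp
      _ = ∏ j, B (if j ∈ T then y else z) (if j ∈ S.map π.toEmbedding then y else z) :=
          Equiv.prod_comp π fun j =>
            B (if j ∈ T then y else z) (if j ∈ S.map π.toEmbedding then y else z)
      _ = F #(S.map π.toEmbedding \ T) := prod_ite_mem_ite_mem (by rw [card_map, h]) B y z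
  simp only [hprod]
  rw [sum_perm_map_eq_sum_powersetCard S (fun A => F #(A \ T)), h,
    sum_powersetCard_card_sdiff T F]
  simp only [nsmul_eq_mul, F]

end PermutationCounting

theorem rank1_eq_vecMulVec {n : Type*} (u v : n → ℂ) : rank1 u v = vecMulVec u (star v) := rfl

section TensorTrace

variable {n : Type*} [Fintype n] {N : ℕ}

theorem braket_eq_dotProduct_mulVec (A : Matrix n n ℂ) (u v : n → ℂ) :
    braket A u v = star u ⬝ᵥ A *ᵥ v := by
  simp only [braket, dotProduct, mulVec, Finset.mul_sum, Pi.star_apply, Complex.star_def,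
    mul_assoc]

theorem braket_swap {A : Matrix n n ℂ} (hA : A.IsHermitian) (u v : n → ℂ) :
    braket A v u = starRingEnd ℂ (braket A u v) := by
  rw [braket_eq_dotProduct_mulVec, braket_eq_dotProduct_mulVec, ← Complex.star_def,
    star_dotProduct, star_mulVec, ← dotProduct_mulVec, hA.eq]

theorem tpowFam_mul_tpowFam (A B : Fin N → Matrix n n ℂ) :
    tpowFam A * tpowFam B = tpowFam (fun i => A i * B i) := by
  ext X Z
  simp only [tpowFam, mul_apply, Fintype.prod_sum, ← Finset.prod_mul_distrib]

theorem trace_mul_permMat [DecidableEq n] (M : Matrix (Fin N → n) (Fin N → n) ℂ)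
    (π : Equiv.Perm (Fin N)) :
    (M * permMat n N π).trace = ∑ Z, M (fun i => Z (π i)) Z := by
  simp only [trace, diag_apply, mul_apply, permMat, mul_ite, mul_one, mul_zero]
  rw [Finset.sum_comm]
  simp only [sum_ite_eq, mem_univ, if_true]

theorem trace_tpowFam_vecMulVec_mul_permMat [DecidableEq n] (u w : Fin N → n → ℂ)
    (π : Equiv.Perm (Fin N)) :
    (tpowFam (fun i => vecMulVec (u i) (w i)) * permMat n N π).trace =
      ∏ i, w (π i) ⬝ᵥ u i := by
  have hreindex : ∀ Z : Fin N → n, ∏ i, u i (Z (π i)) * w i (Z i) =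
      ∏ i, w (π i) (Z (π i)) * u i (Z (π i)) := by
    intro Z
    rw [Finset.prod_mul_distrib, Finset.prod_mul_distrib, mul_comm,
      Equiv.prod_comp π (fun i => w i (Z i))]
  simp only [trace_mul_permMat, tpowFam, vecMulVec_apply, hreindex]
  rw [Fintype.sum_equiv (Equiv.arrowCongr π.symm (Equiv.refl n)) _
    (fun Z => ∏ i, w (π i) (Z i) * u i (Z i)) (fun Z => by simp),
    ← Fintype.prod_sum fun i t => w (π i) t * u i t]
  rfl

theorem trace_tpowFam_rank1_mul_tpow_mul_permMat [DecidableEq n] (ρ : Matrix n n ℂ)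
    (u v : Fin N → n → ℂ) (π : Equiv.Perm (Fin N)) :
    (tpowFam (fun i => rank1 (u i) (v i)) * tpow ρ N * permMat n N π).trace =
      ∏ i, braket ρ (v (π i)) (u i) := by
  rw [show tpow ρ N = tpowFam fun _ => ρ from rfl, tpowFam_mul_tpowFam]
  simp only [rank1_eq_vecMulVec, vecMulVec_mul, trace_tpowFam_vecMulVec_mul_permMat,
    braket_eq_dotProduct_mulVec, dotProduct_mulVec]

theorem sum_trace_tpowFam_rank1_ite_mul_tpow_mul_permMat [DecidableEq n] {ρ : Matrix n n ℂ}
    (hρ : ρ.IsHermitian) {S T : Finset (Fin N)} (h : #S = #T) (x x' : n → ℂ) :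
    ∑ π : Equiv.Perm (Fin N),
      (tpowFam (fun i => rank1 (if i ∈ S then x else x') (if i ∈ T then x else x')) *
        tpow ρ N * permMat n N π).trace =
      ((#T)! * (N - #T)! : ℕ) *
        ∑ l ∈ range (min #T (N - #T) + 1), ((#T).choose l * (N - #T).choose l : ℕ) *
          (((Complex.normSq (braket ρ x x') : ℝ) : ℂ) ^ l * braket ρ x x ^ (#T - l) *
            braket ρ x' x' ^ (N - #T - l)) := by
  simp only [trace_tpowFam_rank1_mul_tpow_mul_permMat]
  rw [sum_perm_prod_ite_mem h, Fintype.card_fin, braket_swap hρ x x', Complex.mul_conj]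

end TensorTrace

theorem card_filter_fin_val_mem {N : ℕ} {s : Finset ℕ} (hs : ∀ k ∈ s, k < N) :
    #{i : Fin N | (i : ℕ) ∈ s} = #s := by
  rw [← card_attachFin s hs]
  congr 1
  ext
  simp

theorem wishart_moment_identity_general
    {d : ℕ} (ρ : Matrix (Fin d) (Fin d) ℂ) (hρ : ρ.PosSemidef)
    (x x' : Fin d → ℂ)
    (a b c : ℕ) :
    ∑ π : Equiv.Perm (Fin (2 * a + b + c)),
      (tpowFam (fun i : Fin (2 * a + b + c) =>
          if (i : ℕ) < a then rank1 x x'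
          else if (i : ℕ) < 2 * a then rank1 x' x
          else if (i : ℕ) < 2 * a + b then rank1 x x
          else rank1 x' x')
        * tpow ρ (2 * a + b + c) * permMat (Fin d) (2 * a + b + c) π).trace
    = (((b + a).factorial : ℂ) * ((c + a).factorial : ℂ)) *
        ∑ l ∈ Finset.range (min (b + a) (c + a) + 1),
          (((b + a).choose l : ℂ) * ((c + a).choose l : ℂ)) *
            ((Complex.normSq (braket ρ x x') : ℝ) : ℂ) ^ l *
            (braket ρ x x) ^ (b + a - l) * (braket ρ x' x') ^ (c + a - l) := by
  let S : Finset (Fin (2 * a + b + c)) := {i | (i : ℕ) ∈ Ico 0 (2 * a + b) \ Ico a (2 * a)}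
  let T : Finset (Fin (2 * a + b + c)) := {i | (i : ℕ) ∈ Ico a (2 * a + b)}
  have hfactors : (fun i : Fin (2 * a + b + c) =>
      if (i : ℕ) < a then rank1 x x'
      else if (i : ℕ) < 2 * a then rank1 x' x
      else if (i : ℕ) < 2 * a + b then rank1 x x
      else rank1 x' x') =
      fun i => rank1 (if i ∈ S then x else x') (if i ∈ T then x else x') := by
    funext i
    simp only [S, T, mem_filter, mem_univ, true_and, mem_sdiff, mem_Ico]
    split_ifs <;> first | rfl | omega
  have hT : #T = b + a := by
    rw [card_filter_fin_val_mem fun k hk => by rw [mem_Ico] at hk; omega, Nat.card_Ico]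
    omega
  have hS : #S = b + a := by
    rw [card_filter_fin_val_mem fun k hk => by rw [mem_sdiff, mem_Ico] at hk; omega,
      card_sdiff_of_subset (Ico_subset_Ico (by omega) (by omega)), Nat.card_Ico, Nat.card_Ico]
    omega
  rw [hfactors, sum_trace_tpowFam_rank1_ite_mul_tpow_mul_permMat hρ.1 (hS.trans hT.symm), hT,
    show 2 * a + b + c - (b + a) = c + a by omega]
  push_cast
  refine congrArg _ (sum_congr rfl fun l _ => by ring)

/-- Wishart moment identity. For orthonormal `x, x'` and a density
matrix `ρ`, the permutation-summed tensor trace equals the diagonal moments of the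
complex central 2×2 Wishart distribution. -/
theorem wishart_moment_identity
    {d : ℕ} (ρ : Matrix (Fin d) (Fin d) ℂ) (hρ : ρ.PosSemidef) (hρt : ρ.trace = 1)
    (x x' : Fin d → ℂ)
    (hx : ∑ i, Complex.normSq (x i) = 1) (hx' : ∑ i, Complex.normSq (x' i) = 1)
    (hxo : ∑ i, (starRingEnd ℂ) (x i) * x' i = 0)
    (a b c : ℕ) (hN : 1 ≤ 2 * a + b + c) :
    ∑ π : Equiv.Perm (Fin (2 * a + b + c)),
      (tpowFam (fun i : Fin (2 * a + b + c) =>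
          if (i : ℕ) < a then rank1 x x'
          else if (i : ℕ) < 2 * a then rank1 x' x
          else if (i : ℕ) < 2 * a + b then rank1 x x
          else rank1 x' x')
        * tpow ρ (2 * a + b + c) * permMat (Fin d) (2 * a + b + c) π).trace
    = (((b + a).factorial : ℂ) * ((c + a).factorial : ℂ)) *
        ∑ l ∈ Finset.range (min (b + a) (c + a) + 1),
          (((b + a).choose l : ℂ) * ((c + a).choose l : ℂ)) *
            ((Complex.normSq (braket ρ x x') : ℝ) : ℂ) ^ l *
            (braket ρ x x) ^ (b + a - l) * (braket ρ x' x') ^ (c + a - l) :=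
  wishart_moment_identity_general ρ hρ x x' a b c
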